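/- Every odd derivation f of degree (s,t) of the super w∞ 3-algebra with s + 2t ≠ 0 is inner: f is a linear combination of ad(h_{1+s}^{t+1/2}, L_{-1}^1), ad(h̄_{1+s}^{t+1/2}, L_{-1}^1), ad(L_1^0, h_{-1+s}^{1+t+1/2}), ad(L_1^0, h̄_{-1+s}^{1+t+1/2}). -/
import Mathlib


noncomputable section

/-- Basis indices of the super `w∞` 3-algebra: `L_m^i`, `L̄_m^i` (even) and
`h_m^{i+1/2}`, `h̄_m^{i+1/2}` (odd). -/
inductive WIdx : Type
  | L (m : ℤ) (i : ℕ)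
  | Lb (m : ℤ) (i : ℕ)
  | H (m : ℤ) (i : ℕ)
  | Hb (m : ℤ) (i : ℕ)
deriving DecidableEq

/-- The underlying superspace of the super `w∞` 3-algebra: the free `ℂ`-module on `WIdx`. -/
abbrev W : Type := WIdx →₀ ℂ

/-- Basis vectors. -/
def e (a : WIdx) : W := Finsupp.single a 1

/-- Parity of a basis index. -/
def par : WIdx → ZMod 2
  | .L _ _ => 0
  | .Lb _ _ => 0
  | .H _ _ => 1
  | .Hb _ _ => 1

/-- The sign `(-1)^a` of a parity. -/
def sg (a : ZMod 2) : ℂ := (-1 : ℂ) ^ a.val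

/-- Structure constant `h(n−m)+j(m−k)+i(k−n)`. -/
def co (m : ℤ) (i : ℕ) (n : ℤ) (j : ℕ) (k : ℤ) (h : ℕ) : ℂ :=
  (h : ℂ) * ((n : ℂ) - (m : ℂ)) + (j : ℂ) * ((m : ℂ) - (k : ℂ))
    + (i : ℂ) * ((k : ℂ) - (n : ℂ))

/-- Structure constant `i(p−r)+α(r−m)+β(m−p)`. -/
def dd (m : ℤ) (i : ℕ) (p : ℤ) (α : ℕ) (r : ℤ) (β : ℕ) : ℂ :=
  (i : ℂ) * ((p : ℂ) - (r : ℂ)) + (α : ℂ) * ((r : ℂ) - (m : ℂ))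
    + (β : ℂ) * ((m : ℂ) - (p : ℂ))

open WIdx in
/-- The 3-bracket of the super `w∞` 3-algebra on basis indices; unlisted brackets are
obtained by super-skew-symmetry or vanish. -/
def wbr : WIdx → WIdx → WIdx → W
  | L m i, L n j, L k u => co m i n j k u • e (L (m+n+k) (i+j+u-1))
  | L m i, L n j, Lb k u => co m i n j k u • e (Lb (m+n+k) (i+j+u-1))
  | L m i, Lb k u, L n j => co m i k u n j • e (Lb (m+n+k) (i+j+u-1))
  | Lb k u, L m i, L n j => co k u m i n j • e (Lb (m+n+k) (i+j+u-1))
  | L m i, L n j, H p α => co m i n j p α • e (H (m+n+p) (i+j+α-1))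
  | L m i, H p α, L n j => co m i p α n j • e (H (m+n+p) (i+j+α-1))
  | H p α, L m i, L n j => co p α m i n j • e (H (m+n+p) (i+j+α-1))
  | L m i, L n j, Hb p α => co m i n j p α • e (Hb (m+n+p) (i+j+α-1))
  | L m i, Hb p α, L n j => co m i p α n j • e (Hb (m+n+p) (i+j+α-1))
  | Hb p α, L m i, L n j => co p α m i n j • e (Hb (m+n+p) (i+j+α-1))
  | L m i, H p α, Hb r β => dd m i p α r β • e (Lb (m+p+r) (i+α+β-1))
  | L m i, Hb r β, H p α => dd m i p α r β • e (Lb (m+p+r) (i+α+β-1))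
  | H p α, L m i, Hb r β => (- dd m i p α r β) • e (Lb (m+p+r) (i+α+β-1))
  | Hb r β, L m i, H p α => (- dd m i p α r β) • e (Lb (m+p+r) (i+α+β-1))
  | H p α, Hb r β, L m i => dd m i p α r β • e (Lb (m+p+r) (i+α+β-1))
  | Hb r β, H p α, L m i => dd m i p α r β • e (Lb (m+p+r) (i+α+β-1))
  | _, _, _ => 0

/-- The trilinear extension of `wbr` to the whole of `W`. -/
def wbracket (x y z : W) : W :=
  x.sum fun a ca => y.sum fun b cb => z.sum fun c cc => (ca * cb * cc) • wbr a b c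

/-- The `ℤ/2`-grading of `w∞`: the span of the basis vectors of a given parity. -/
def wgr (j : ZMod 2) : Submodule ℂ W :=
  Submodule.span ℂ {w : W | ∃ a : WIdx, par a = j ∧ w = e a}

lemma my_sum_pair (α β : ℂ) (X Y : WIdx) (v : WIdx → W) :
    (α • e X + β • e Y).sum (fun a ca => ca • v a) = α • v X + β • v Y := by
  classical
  rw [Finsupp.sum_add_index' (h := fun a ca => ca • v a) (fun a => zero_smul _ _)
    (fun a b₁ b₂ => add_smul _ _ _)]
  simp [e, Finsupp.smul_single, Finsupp.sum_single_index]

lemma my_wbracket_left (x : W) (b c : WIdx) :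
    wbracket x (e b) (e c) = x.sum fun a ca => ca • wbr a b c := by
  unfold wbracket
  refine Finsupp.sum_congr fun a _ => ?_
  simp [e, Finsupp.sum_single_index]

lemma my_wbracket_mid (a : WIdx) (x : W) (c : WIdx) :
    wbracket (e a) x (e c) = x.sum fun b cb => cb • wbr a b c := by
  unfold wbracket
  rw [e, Finsupp.sum_single_index (by simp)]
  refine Finsupp.sum_congr fun b _ => ?_
  simp [e, Finsupp.sum_single_index]

lemma my_wbracket_right (a b : WIdx) (x : W) :
    wbracket (e a) (e b) x = x.sum fun c cc => cc • wbr a b c := by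
  unfold wbracket
  rw [e, Finsupp.sum_single_index (by simp)]
  rw [e, Finsupp.sum_single_index (by simp)]
  refine Finsupp.sum_congr fun c _ => ?_
  simp

/-- every odd derivation `f` of degree `(s,t)` of the super `w∞` 3-algebra with
`s + 2t ≠ 0` is inner: a linear combination of `ad(h_{1+s}^{t+1/2}, L_{-1}^1)`,
`ad(h̄_{1+s}^{t+1/2}, L_{-1}^1)`, `ad(L_1^0, h_{-1+s}^{1+t+1/2})`, `ad(L_1^0, h̄_{-1+s}^{1+t+1/2})`. -/
theorem odd_derivation_inner (s : ℤ) (t : ℕ) (hst : s + 2 * (t : ℤ) ≠ 0)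
    (f : W →ₗ[ℂ] W)
    -- `f` is odd of degree `(s,t)`
    (hdegL : ∀ (m : ℤ) (i : ℕ), ∃ α β : ℂ,
      f (e (.L m i)) = α • e (.H (m+s) (i+t)) + β • e (.Hb (m+s) (i+t)))
    (hdegLb : ∀ (m : ℤ) (i : ℕ), ∃ α β : ℂ,
      f (e (.Lb m i)) = α • e (.H (m+s) (i+t)) + β • e (.Hb (m+s) (i+t)))
    (hdegH : ∀ (m : ℤ) (i : ℕ), ∃ α β : ℂ,
      f (e (.H m i)) = α • e (.L (m+s) (i+t)) + β • e (.Lb (m+s) (i+t)))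
    (hdegHb : ∀ (m : ℤ) (i : ℕ), ∃ α β : ℂ,
      f (e (.Hb m i)) = α • e (.L (m+s) (i+t)) + β • e (.Lb (m+s) (i+t)))
    -- `f` is an odd derivation
    (hder : ∀ a b c : WIdx,
      f (wbr a b c) = wbracket (f (e a)) (e b) (e c)
        + sg (par a) • wbracket (e a) (f (e b)) (e c)
        + sg (par a + par b) • wbracket (e a) (e b) (f (e c))) :
    ∃ c₁ c₂ c₃ c₄ : ℂ, ∀ w : W,
      f w = c₁ • wbracket (e (.H (1+s) t)) (e (.L (-1) 1)) w
        + c₂ • wbracket (e (.Hb (1+s) t)) (e (.L (-1) 1)) w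
        + c₃ • wbracket (e (.L 1 0)) (e (.H (-1+s) (1+t))) w
        + c₄ • wbracket (e (.L 1 0)) (e (.Hb (-1+s) (1+t))) w := by
  classical
  have hst' : ((s : ℂ) + 2 * (t : ℂ)) ≠ 0 := by
    intro h
    apply hst
    exact_mod_cast (by push_cast; linear_combination h : ((s + 2 * (t:ℤ) : ℤ) : ℂ) = 0)
  obtain ⟨a₀, b₀, h₀⟩ := hdegL 1 0
  obtain ⟨a₁, b₁, h₁⟩ := hdegL (-1) 1
  set K : ℂ := (s : ℂ) + 2 * (t : ℂ) with hK
  refine ⟨a₀ / K, b₀ / K, a₁ / K, b₁ / K, ?_⟩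
  have key : ∀ a : WIdx, K • f (e a) =
      a₀ • wbr (.H (1+s) t) (.L (-1) 1) a + b₀ • wbr (.Hb (1+s) t) (.L (-1) 1) a
      + a₁ • wbr (.L 1 0) (.H (-1+s) (1+t)) a + b₁ • wbr (.L 1 0) (.Hb (-1+s) (1+t)) a := by
    intro a
    have hd := hder a (.L 1 0) (.L (-1) 1)
    rw [h₀, h₁] at hd
    rw [my_wbracket_mid, my_wbracket_right, my_sum_pair, my_sum_pair] at hd
    cases a with
    | L m i =>
      obtain ⟨α, β, hfa⟩ := hdegL m i
      rw [hfa, my_wbracket_left, my_sum_pair] at hd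
      simp only [wbr, par] at hd ⊢
      norm_num [sg] at hd ⊢
      rw [hfa] at hd ⊢
      simp only [show m + -1 + (1+s) = m + s from by ring,
        show m + 1 + (-1+s) = m + s from by ring,
        show -1 + m + (1+s) = m + s from by ring,
        show 1 + m + (-1+s) = m + s from by ring,
        show i + (1+t) - 1 = i + t from by omega,
        show 1 + i + t - 1 = i + t from by omega] at hd ⊢
      simp only [co, hK] at hd ⊢
      push_cast at hd ⊢
      linear_combination (norm := module) hd
    | Lb m i =>
      obtain ⟨α, β, hfa⟩ := hdegLb m i
      rw [hfa, my_wbracket_left, my_sum_pair] at hd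
      simp only [wbr, par] at hd ⊢
      norm_num [sg, show ZMod.val (1 : ZMod 2) = 1 from rfl] at hd ⊢
      rw [hfa] at hd
      refine Or.inr ?_
      have hα := congrArg (fun w : W => w (WIdx.H (m+s) (i+t))) hd
      have hβ := congrArg (fun w : W => w (WIdx.Hb (m+s) (i+t))) hd
      simp [e, Finsupp.single_apply] at hα hβ
      have hα0 : α * K = 0 := by
        simp only [co, hK] at hα ⊢; push_cast at hα ⊢; linear_combination hα
      have hβ0 : β * K = 0 := by
        simp only [co, hK] at hβ ⊢; push_cast at hβ ⊢; linear_combination hβ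
      have hα' : α = 0 := by
        rcases mul_eq_zero.mp hα0 with h | h
        · exact h
        · exact absurd h hst'
      have hβ' : β = 0 := by
        rcases mul_eq_zero.mp hβ0 with h | h
        · exact h
        · exact absurd h hst'
      rw [hfa, hα', hβ']
      simp
    | H m i =>
      obtain ⟨α, β, hfa⟩ := hdegH m i
      rw [hfa, my_wbracket_left, my_sum_pair] at hd
      simp only [wbr, par] at hd ⊢
      norm_num [sg, show ZMod.val (1 : ZMod 2) = 1 from rfl] at hd ⊢
      rw [hfa] at hd ⊢
      simp only [show m + -1 + (1+s) = m + s from by ring,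
        show m + 1 + (-1+s) = m + s from by ring,
        show -1 + m + (1+s) = m + s from by ring,
        show 1 + m + (-1+s) = m + s from by ring,
        show s + m = m + s from by ring,
        show i + (1+t) - 1 = i + t from by omega,
        show 1 + i + t - 1 = i + t from by omega,
        show 1 + t + i - 1 = i + t from by omega] at hd ⊢
      simp only [co, dd, hK] at hd ⊢
      push_cast at hd ⊢
      linear_combination (norm := module) hd
    | Hb m i =>
      obtain ⟨α, β, hfa⟩ := hdegHb m i
      rw [hfa, my_wbracket_left, my_sum_pair] at hd
      simp only [wbr, par] at hd ⊢
      norm_num [sg, show ZMod.val (1 : ZMod 2) = 1 from rfl] at hd ⊢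
      rw [hfa] at hd ⊢
      simp only [show m + -1 + (1+s) = m + s from by ring,
        show m + 1 + (-1+s) = m + s from by ring,
        show -1 + m + (1+s) = m + s from by ring,
        show 1 + m + (-1+s) = m + s from by ring,
        show s + m = m + s from by ring,
        show i + (1+t) - 1 = i + t from by omega,
        show 1 + i + t - 1 = i + t from by omega,
        show 1 + t + i - 1 = i + t from by omega] at hd ⊢
      simp only [co, dd, hK] at hd ⊢
      push_cast at hd ⊢
      linear_combination (norm := module) hd
  have key' : ∀ a : WIdx, f (e a) =
      (a₀/K) • wbr (.H (1+s) t) (.L (-1) 1) a + (b₀/K) • wbr (.Hb (1+s) t) (.L (-1) 1) a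
      + (a₁/K) • wbr (.L 1 0) (.H (-1+s) (1+t)) a
      + (b₁/K) • wbr (.L 1 0) (.Hb (-1+s) (1+t)) a := by
    intro a
    have h := key a
    have h2 : f (e a) = K⁻¹ • (K • f (e a)) := by
      rw [smul_smul, inv_mul_cancel₀ hst', one_smul]
    rw [h2, h, smul_add, smul_add, smul_add, smul_smul, smul_smul, smul_smul, smul_smul]
    rw [div_eq_inv_mul, div_eq_inv_mul, div_eq_inv_mul, div_eq_inv_mul]
  intro w
  rw [my_wbracket_right, my_wbracket_right, my_wbracket_right, my_wbracket_right]
  rw [Finsupp.smul_sum, Finsupp.smul_sum, Finsupp.smul_sum, Finsupp.smul_sum]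
  rw [← Finsupp.sum_add, ← Finsupp.sum_add, ← Finsupp.sum_add]
  conv_lhs => rw [← Finsupp.sum_single w]
  rw [map_finsuppSum]
  refine Finsupp.sum_congr fun a _ => ?_
  have : Finsupp.single a (w a) = (w a) • e a := by simp [e, Finsupp.smul_single]
  rw [this, map_smul, key' a]
  module
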